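/- Let Γ be a finite simplicial graph with no SIL whose vertices are labeled by nontrivial cyclic groups and let G_Γ be the associated graph product. Then the assignment p_{v,C} ↦ π_{v,C} extends to a surjective group homomorphism φ: G_{Γ̃} → Aut^pc(G_Γ). -/

import Mathlib

/-!
Since `π_{v,C}^n` is the partial conjugation by `v^n`, the order of `π_{v,C}` divides the
order of `v`, so `p_{v,C} ↦ π_{v,C}` extends to the vertex group at `p_{v,C}`. By the universal
property of graph products it then suffices that `π_{v,C}` and `π_{w,D}` commute whenever
`p_{v,C}` and `p_{w,D}` are adjacent in `Γ̃`. This is a direct computation when `v = w` or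
`v ~ w`. Otherwise, say `w ∉ C`; the absence of a SIL makes `C ⊆ D` if `v ∈ D` and
`C ∩ D = ∅` if `v ∉ D`, and in both cases the two automorphisms commute. The image is
generated by the `π_{v,C}`, which gives surjectivity onto `Aut^pc(G_Γ)`.
-/

open Monoid

namespace ArXiv

universe u uG

variable {V : Type u}

/-- The star of a vertex: the vertex together with its neighbors. -/
def star (Γ : SimpleGraph V) (v : V) : Set V := insert v (Γ.neighborSet v)

/-- `C ⊆ V` is the vertex set of a connected component of the full subgraph of `Γ`
induced on `S`. -/
def IsCompOf (Γ : SimpleGraph V) (S : Set V) (C : Set V) : Prop :=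
  ∃ c : (Γ.induce S).ConnectedComponent, C = Subtype.val '' c.supp

/-- `Γ` has a separating intersection of links: there are distinct non-adjacent vertices
`v, w` such that some connected component of `Γ ∖ (lk(v) ∩ lk(w))` contains neither `v`
nor `w`. -/
def HasSIL (Γ : SimpleGraph V) : Prop :=
  ∃ v w : V, v ≠ w ∧ ¬ Γ.Adj v w ∧
    ∃ C : Set V, IsCompOf Γ ((Γ.neighborSet v ∩ Γ.neighborSet w)ᶜ) C ∧ v ∉ C ∧ w ∉ C

variable (Γ : SimpleGraph V) (G : V → Type uG) [∀ v, Group (G v)]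

/-- The commutator relators defining the graph product. -/
def rels : Set (Monoid.CoprodI G) :=
  {x | ∃ (v w : V) (_ : Γ.Adj v w) (g : G v) (h : G w),
    x = CoprodI.of g * CoprodI.of h * (CoprodI.of g)⁻¹ * (CoprodI.of h)⁻¹}

/-- The graph product of the vertex groups `G v` over the graph `Γ`: the quotient of the
free product by the normal closure of the commutators of adjacent vertex groups. -/
def GraphProduct : Type (max u uG) :=
  Monoid.CoprodI G ⧸ Subgroup.normalClosure (rels Γ G)

instance : Group (GraphProduct Γ G) :=
  inferInstanceAs (Group (Monoid.CoprodI G ⧸ Subgroup.normalClosure (rels Γ G)))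

/-- The canonical map from a vertex group into the graph product. -/
def of {v : V} : G v →* GraphProduct Γ G :=
  (QuotientGroup.mk' (Subgroup.normalClosure (rels Γ G))).comp CoprodI.of

theorem of_commute {v w : V} (h : Γ.Adj v w) (g : G v) (k : G w) :
    Commute (of Γ G g) (of Γ G k) := by
  rw [← commutatorElement_eq_one_iff_commute]
  have hmem : (CoprodI.of g * CoprodI.of k * (CoprodI.of g)⁻¹ * (CoprodI.of k)⁻¹ :
      Monoid.CoprodI G) ∈ Subgroup.normalClosure (rels Γ G) :=
    Subgroup.subset_normalClosure ⟨v, w, h, g, k, rfl⟩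
  have h1 : (QuotientGroup.mk' (Subgroup.normalClosure (rels Γ G)))
      (CoprodI.of g * CoprodI.of k * (CoprodI.of g)⁻¹ * (CoprodI.of k)⁻¹) = 1 :=
    (QuotientGroup.eq_one_iff _).mpr hmem
  simp only [map_mul, map_inv] at h1
  rw [commutatorElement_def]
  exact h1

/-- `π` is the partial conjugation `π_{v,C}`, for vertex groups with chosen generators
`gen`: it conjugates the generators in `C` by (the generator of) `v` and fixes all other
generators. -/
def IsPartialConj (gen : ∀ v, G v) (π : MulAut (GraphProduct Γ G)) (v : V) (C : Set V) :
    Prop :=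
  (∀ u ∈ C, ∀ g : G u, π (of Γ G g) = of Γ G (gen v) * of Γ G g * (of Γ G (gen v))⁻¹) ∧
  (∀ u ∉ C, ∀ g : G u, π (of Γ G g) = of Γ G g)

/-- `π` is the partial conjugation `π_{a,C}` by the element `a` of the vertex group `G v`:
it conjugates the vertex groups in `C` by `a` and fixes all other vertex groups. -/
def IsPartialConjBy {v : V} (a : G v) (π : MulAut (GraphProduct Γ G)) (C : Set V) : Prop :=
  (∀ u ∈ C, ∀ g : G u, π (of Γ G g) = of Γ G a * of Γ G g * (of Γ G a)⁻¹) ∧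
  (∀ u ∉ C, ∀ g : G u, π (of Γ G g) = of Γ G g)

/-- The vertex set of the graph `Γ̃`: pairs `p_{v,C}` where `C` is a connected component
of `Γ ∖ st(v)`. -/
def TV : Type u := {p : V × Set V // IsCompOf Γ ((star Γ p.1)ᶜ) p.2}

/-- The graph `Γ̃`: vertices `p_{v,C}` and `p_{w,D}` are joined by an edge unless
`v, w` are distinct non-adjacent vertices with `v ∈ D` and `w ∈ C`. -/
def tilde : SimpleGraph (TV Γ) where
  Adj p q := p ≠ q ∧
    ¬(p.1.1 ≠ q.1.1 ∧ ¬ Γ.Adj p.1.1 q.1.1 ∧ p.1.1 ∈ q.1.2 ∧ q.1.1 ∈ p.1.2)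
  symm := ⟨by
    rintro p q ⟨h1, h2⟩
    exact ⟨h1.symm, fun ⟨a, b, c, d⟩ => h2 ⟨a.symm, fun e => b e.symm, d, c⟩⟩⟩
  loopless := ⟨fun p h => h.1 rfl⟩

/-- The graph product `G_{Γ̃}`, where the vertex `p_{v,C}` is labeled by (a copy of) the
group `G v`. -/
abbrev TildeProduct : Type (max u uG) :=
  GraphProduct (tilde Γ) (fun p : TV Γ => G p.1.1)

/-- The element `p_v = ∏_C p_{v,C} ∈ G_{Γ̃}`, the product over all connected components
`C` of `Γ ∖ st(v)` (the factors pairwise commute). -/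
noncomputable def pvert [Finite V] (gen : ∀ v, G v) (v : V) : TildeProduct Γ G :=
  haveI : Fintype {C : Set V // IsCompOf Γ ((star Γ v)ᶜ) C} := Fintype.ofFinite _
  Finset.noncommProd (Finset.univ : Finset {C : Set V // IsCompOf Γ ((star Γ v)ᶜ) C})
    (fun c => of (tilde Γ) (fun p : TV Γ => G p.1.1) (v := ⟨(v, c.1), c.2⟩) (gen v))
    (by
      intro a _ b _ hab
      have hadj : (tilde Γ).Adj ⟨(v, a.1), a.2⟩ ⟨(v, b.1), b.2⟩ := by
        show _ ≠ _ ∧ ¬ _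
        refine ⟨fun h => hab (Subtype.ext (congrArg (fun x : TV Γ => x.1.2) h)), ?_⟩
        rintro ⟨hne, -⟩
        exact hne rfl
      exact of_commute (tilde Γ) (fun p : TV Γ => G p.1.1) hadj (gen v) (gen v))

/-- The set `Δ` of vertices adjacent to every other vertex of `Γ`. -/
def Delta (Γ : SimpleGraph V) : Set V := {v | ∀ u, u ≠ v → Γ.Adj v u}

/-- The subgroup of the graph product generated by the vertex groups `G v`, `v ∈ T`. -/
def vertexSubgroup (T : Set V) : Subgroup (GraphProduct Γ G) :=
  Subgroup.closure {x | ∃ v ∈ T, ∃ g : G v, x = of Γ G g}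

/-- `w` is a reduced word for the element `g` of the graph product: a minimal length
expression of `g` as a product of nontrivial elements of vertex groups. -/
def IsReducedWord (g : GraphProduct Γ G) (w : List (Σ v : V, G v)) : Prop :=
  (w.map fun l => of Γ G l.2).prod = g ∧ (∀ l ∈ w, l.2 ≠ 1) ∧
    ∀ w' : List (Σ v : V, G v), (w'.map fun l => of Γ G l.2).prod = g →
      w.length ≤ w'.length

section Components

variable {Γ} {S C D T : Set V}

lemma IsCompOf.subset (h : IsCompOf Γ S C) : C ⊆ S := by
  obtain ⟨c, rfl⟩ := h
  rintro _ ⟨x, -, rfl⟩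
  exact x.2

lemma exists_isCompOf_mem {x : V} (hx : x ∈ S) : ∃ C, IsCompOf Γ S C ∧ x ∈ C :=
  ⟨_, ⟨_, rfl⟩, ⟨⟨x, hx⟩, rfl, rfl⟩⟩

lemma IsCompOf.eq_of_mem (hC : IsCompOf Γ S C) (hD : IsCompOf Γ S D) {x : V}
    (hxC : x ∈ C) (hxD : x ∈ D) : C = D := by
  obtain ⟨c, rfl⟩ := hC
  obtain ⟨d, rfl⟩ := hD
  obtain ⟨x, hxc, rfl⟩ := hxC
  obtain ⟨x', hxd, hx'⟩ := hxD
  obtain rfl := Subtype.ext hx'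
  rw [SimpleGraph.ConnectedComponent.mem_supp_iff] at hxc hxd
  rw [← hxc, ← hxd]

lemma IsCompOf.subset_of_closed (hC : IsCompOf Γ S C)
    (hT : ∀ x y, x ∈ S → y ∈ T → Γ.Adj x y → x ∈ T) {u : V} (huC : u ∈ C) (huT : u ∈ T) :
    C ⊆ T := by
  have walk_mem : ∀ {a b : S}, (Γ.induce S).Walk a b → b.1 ∈ T → a.1 ∈ T := by
    intro a b p hb
    induction p with
    | nil => exact hb
    | cons hxy _ ih => exact hT _ _ (Subtype.prop _) (ih hb) hxy
  obtain ⟨c, rfl⟩ := hC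
  obtain ⟨u, huc, rfl⟩ := huC
  rintro _ ⟨x, hxc, rfl⟩
  rw [SimpleGraph.ConnectedComponent.mem_supp_iff] at huc hxc
  obtain ⟨p⟩ := SimpleGraph.ConnectedComponent.exact (hxc.trans huc.symm)
  exact walk_mem p huT

lemma IsCompOf.mem_of_adj (hC : IsCompOf Γ S C) {x y : V} (hx : x ∈ S) (hy : y ∈ C)
    (hxy : Γ.Adj x y) : x ∈ C := by
  obtain ⟨c, rfl⟩ := hC
  obtain ⟨y, hyc, rfl⟩ := hy
  refine ⟨⟨x, hx⟩, ?_, rfl⟩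
  rw [SimpleGraph.ConnectedComponent.mem_supp_iff] at hyc ⊢
  rw [← hyc]
  exact SimpleGraph.ConnectedComponent.sound
    (SimpleGraph.Adj.reachable (show (Γ.induce S).Adj ⟨x, hx⟩ y from hxy))

end Components

section NoSIL

variable {Γ} {v w : V} {C D : Set V}

lemma notMem_star_of_ne_of_not_adj (hvw : v ≠ w) (hadj : ¬ Γ.Adj v w) : w ∉ star Γ v := by
  rintro (rfl | h)
  exacts [hvw rfl, hadj h]

lemma IsCompOf.notMem_star (hC : IsCompOf Γ (star Γ v)ᶜ C) (hw : w ∉ star Γ v) (hwC : w ∉ C)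
    {x : V} (hx : x ∈ C) : x ∉ star Γ w := by
  rintro (rfl | hwx)
  exacts [hwC hx, hwC (hC.mem_of_adj hw hx hwx)]

/-- The component of `Γ ∖ (lk(v) ∩ lk(w))` through a common vertex of `C` and `D` stays
inside `C ∩ D`, so it avoids `v` and `w`: it would be a SIL. -/
lemma IsCompOf.disjoint_of_not_hasSIL (hsil : ¬ HasSIL Γ) (hvw : v ≠ w) (hadj : ¬ Γ.Adj v w)
    (hC : IsCompOf Γ (star Γ v)ᶜ C) (hD : IsCompOf Γ (star Γ w)ᶜ D) (hwC : w ∉ C)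
    (hvD : v ∉ D) : Disjoint C D := by
  have hwv := notMem_star_of_ne_of_not_adj hvw hadj
  have hvw' := notMem_star_of_ne_of_not_adj hvw.symm (fun h => hadj h.symm)
  have closed : ∀ x y, x ∈ (Γ.neighborSet v ∩ Γ.neighborSet w)ᶜ → y ∈ C ∩ D → Γ.Adj x y →
      x ∈ C ∩ D := by
    rintro x y hxL ⟨hyC, hyD⟩ hxy
    have hxv : x ∉ star Γ v := by
      rintro (rfl | hvx)
      · exact hC.subset hyC (Or.inr hxy)
      · have hxw : x ∉ star Γ w := by
          rintro (rfl | hwx)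
          exacts [hadj hvx, hxL ⟨hvx, hwx⟩]
        exact hD.notMem_star hvw' hvD (hD.mem_of_adj hxw hyD hxy) (Or.inr hvx)
    have hxw : x ∉ star Γ w := by
      rintro (rfl | hwx)
      · exact hD.subset hyD (Or.inr hxy)
      · exact hC.notMem_star hwv hwC (hC.mem_of_adj hxv hyC hxy) (Or.inr hwx)
    exact ⟨hC.mem_of_adj hxv hyC hxy, hD.mem_of_adj hxw hyD hxy⟩
  rw [Set.disjoint_left]
  intro u huC huD
  have huL : u ∈ (Γ.neighborSet v ∩ Γ.neighborSet w)ᶜ := fun h => hC.subset huC (Or.inr h.1)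
  obtain ⟨E, hE, huE⟩ := exists_isCompOf_mem (Γ := Γ) huL
  have hECD := hE.subset_of_closed closed huE ⟨huC, huD⟩
  exact hsil ⟨v, w, hvw, hadj, E, hE, fun h => hvD (hECD h).2, fun h => hwC (hECD h).1⟩

lemma IsCompOf.subset_of_not_hasSIL (hsil : ¬ HasSIL Γ) (hvw : v ≠ w) (hadj : ¬ Γ.Adj v w)
    (hC : IsCompOf Γ (star Γ v)ᶜ C) (hD : IsCompOf Γ (star Γ w)ᶜ D) (hwC : w ∉ C)
    (hvD : v ∈ D) : C ⊆ D := by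
  intro u huC
  have huw : u ∉ star Γ w := hC.notMem_star (notMem_star_of_ne_of_not_adj hvw hadj) hwC huC
  obtain ⟨D', hD', huD'⟩ := exists_isCompOf_mem (S := (star Γ w)ᶜ) huw
  by_cases hvD' : v ∈ D'
  · exact hD'.eq_of_mem hD hvD' hvD ▸ huD'
  · have hCD' := hC.disjoint_of_not_hasSIL hsil hvw hadj hD' hwC hvD'
    exact absurd huD' (Set.disjoint_left.mp hCD' huC)

end NoSIL

namespace GraphProduct

variable {Γ G} {H : Type*} [Group H]

theorem hom_ext {f g : GraphProduct Γ G →* H}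
    (h : ∀ v, f.comp (of Γ G (v := v)) = g.comp (of Γ G)) : f = g :=
  QuotientGroup.monoidHom_ext _ (CoprodI.ext_hom _ _ h)

theorem mulAut_ext {π σ : MulAut (GraphProduct Γ G)}
    (h : ∀ (v : V) (g : G v), π (of Γ G g) = σ (of Γ G g)) : π = σ :=
  MulEquiv.toMonoidHom_injective <| hom_ext fun v => MonoidHom.ext (h v)

def lift (f : ∀ v, G v →* H)
    (hf : ∀ {v w}, Γ.Adj v w → ∀ (g : G v) (k : G w), Commute (f v g) (f w k)) :
    GraphProduct Γ G →* H :=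
  QuotientGroup.lift _ (CoprodI.lift f) <| Subgroup.normalClosure_le_normal <| by
    rintro _ ⟨v, w, hvw, g, k, rfl⟩
    rw [SetLike.mem_coe, MonoidHom.mem_ker, ← commutatorElement_def, map_commutatorElement,
      commutatorElement_eq_one_iff_commute, CoprodI.lift_of, CoprodI.lift_of]
    exact hf hvw g k

variable (f : ∀ v, G v →* H)
  (hf : ∀ {v w}, Γ.Adj v w → ∀ (g : G v) (k : G w), Commute (f v g) (f w k))

@[simp]
theorem lift_of {v : V} (g : G v) : lift f hf (of Γ G g) = f v g :=
  CoprodI.lift_of f g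

theorem range_lift : (lift f hf).range = ⨆ v, (f v).range := by
  rw [← CoprodI.range_eq_iSup]
  ext x
  constructor
  · rintro ⟨y, rfl⟩
    obtain ⟨z, rfl⟩ := QuotientGroup.mk'_surjective _ y
    exact ⟨z, rfl⟩
  · rintro ⟨z, rfl⟩
    exact ⟨QuotientGroup.mk' _ z, rfl⟩

end GraphProduct

namespace IsPartialConjBy

variable {Γ G} {v w : V} {a : G v} {b : G w} {π σ : MulAut (GraphProduct Γ G)}
  {C D : Set V}

lemma pow (h : IsPartialConjBy Γ G a π C) (hvC : v ∉ C) (n : ℕ) :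
    IsPartialConjBy Γ G (a ^ n) (π ^ n) C := by
  induction n with
  | zero => exact ⟨fun u _ g => by simp, fun u _ g => by simp⟩
  | succ n ih =>
    refine ⟨fun u hu g => ?_, fun u hu g => ?_⟩
    · rw [pow_succ, MulAut.mul_apply, h.1 u hu g, map_mul, map_mul, map_inv,
        ih.1 u hu g, ih.2 v hvC a, pow_succ', map_mul]
      group
    · rw [pow_succ, MulAut.mul_apply, h.2 u hu g, ih.2 u hu g]

lemma eq_one (h : IsPartialConjBy Γ G (1 : G v) π C) : π = 1 :=
  GraphProduct.mulAut_ext fun u g => by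
    by_cases hu : u ∈ C
    · simp [h.1 u hu g]
    · simp [h.2 u hu g]

lemma orderOf_dvd (h : IsPartialConjBy Γ G a π C) (hvC : v ∉ C) : orderOf π ∣ orderOf a :=
  orderOf_dvd_of_pow_eq_one <| eq_one <| pow_orderOf_eq_one a ▸ h.pow hvC (orderOf a)

lemma commute (hπ : IsPartialConjBy Γ G a π C) (hσ : IsPartialConjBy Γ G b σ D)
    (hvD : v ∉ D) (hwC : w ∉ C) (hab : (C ∩ D).Nonempty → Commute (of Γ G a) (of Γ G b)) :
    Commute π σ := by
  refine GraphProduct.mulAut_ext fun u g => ?_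
  rw [MulAut.mul_apply, MulAut.mul_apply]
  by_cases huC : u ∈ C <;> by_cases huD : u ∈ D
  · rw [hσ.1 u huD g, hπ.1 u huC g, map_mul, map_mul, map_inv, map_mul, map_mul, map_inv,
      hπ.2 w hwC b, hπ.1 u huC g, hσ.2 v hvD a, hσ.1 u huD g]
    calc _ = (of Γ G b * of Γ G a) * of Γ G g * (of Γ G b * of Γ G a)⁻¹ := by group
      _ = (of Γ G a * of Γ G b) * of Γ G g * (of Γ G a * of Γ G b)⁻¹ := by
        rw [(hab ⟨u, huC, huD⟩).eq]
      _ = _ := by group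
  · rw [hσ.2 u huD g, hπ.1 u huC g, map_mul, map_mul, map_inv, hσ.2 v hvD a, hσ.2 u huD g]
  · rw [hπ.2 u huC g, hσ.1 u huD g, map_mul, map_mul, map_inv, hπ.2 w hwC b, hπ.2 u huC g]
  · rw [hσ.2 u huD g, hπ.2 u huC g, hσ.2 u huD g]

lemma commute_of_subset (hπ : IsPartialConjBy Γ G a π C) (hσ : IsPartialConjBy Γ G b σ D)
    (hCD : C ⊆ D) (hwC : w ∉ C) (hvD : v ∈ D) : Commute π σ := by
  refine GraphProduct.mulAut_ext fun u g => ?_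
  rw [MulAut.mul_apply, MulAut.mul_apply]
  by_cases huC : u ∈ C
  · rw [hσ.1 u (hCD huC) g, hπ.1 u huC g, map_mul, map_mul, map_inv, map_mul, map_mul,
      map_inv, hπ.2 w hwC b, hπ.1 u huC g, hσ.1 v hvD a, hσ.1 u (hCD huC) g]
    group
  · by_cases huD : u ∈ D
    · rw [hπ.2 u huC g, hσ.1 u huD g, map_mul, map_mul, map_inv, hπ.2 w hwC b, hπ.2 u huC g]
    · rw [hσ.2 u huD g, hπ.2 u huC g, hσ.2 u huD g]

end IsPartialConjBy

lemma TV.fst_notMem_snd (p : TV Γ) : p.1.1 ∉ p.1.2 :=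
  fun h => p.2.subset h (Set.mem_insert _ _)

variable {Γ G} in
lemma IsPartialConj.commute_of_adj (hsil : ¬ HasSIL Γ) {gen : ∀ v, G v}
    {π : TV Γ → MulAut (GraphProduct Γ G)}
    (hπ : ∀ p : TV Γ, IsPartialConj Γ G gen (π p) p.1.1 p.1.2) {p q : TV Γ}
    (hpq : (tilde Γ).Adj p q) : Commute (π p) (π q) := by
  rcases p with ⟨⟨v, C⟩, hC⟩
  rcases q with ⟨⟨w, D⟩, hD⟩
  have hπp : IsPartialConjBy Γ G (gen v) (π ⟨(v, C), hC⟩) C := hπ ⟨(v, C), hC⟩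
  have hπq : IsPartialConjBy Γ G (gen w) (π ⟨(w, D), hD⟩) D := hπ ⟨(w, D), hD⟩
  by_cases hvw : v = w
  · subst hvw
    exact hπp.commute hπq (TV.fst_notMem_snd Γ ⟨_, hD⟩) (TV.fst_notMem_snd Γ ⟨_, hC⟩)
      fun _ => Commute.refl _
  by_cases hadj : Γ.Adj v w
  · have hvD : v ∉ D := fun h => hD.subset h (Or.inr hadj.symm)
    have hwC : w ∉ C := fun h => hC.subset h (Or.inr hadj)
    exact hπp.commute hπq hvD hwC fun _ => of_commute Γ G hadj _ _
  by_cases hvD : v ∈ D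
  · have hwC : w ∉ C := fun hwC => hpq.2 ⟨hvw, hadj, hvD, hwC⟩
    exact hπp.commute_of_subset hπq (hC.subset_of_not_hasSIL hsil hvw hadj hD hwC hvD) hwC hvD
  by_cases hwC : w ∈ C
  · exact (hπq.commute_of_subset hπp
      (hD.subset_of_not_hasSIL hsil (Ne.symm hvw) (fun h => hadj h.symm) hC hvD hwC)
      hvD hwC).symm
  · have hCD := hC.disjoint_of_not_hasSIL hsil hvw hadj hD hwC hvD
    exact hπp.commute hπq hvD hwC fun ⟨u, huC, huD⟩ => (Set.disjoint_left.mp hCD huC huD).elim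

section Generators

variable {K H : Type*} [Group K] [Group H]

lemma _root_.range_monoidHomOfForallMemZpowers {k : K} {h : H} (hk : ∀ x, x ∈ Subgroup.zpowers k)
    (hh : orderOf h ∣ orderOf k) :
    (monoidHomOfForallMemZpowers hk hh).range = Subgroup.zpowers h := by
  rw [MonoidHom.range_eq_map, ← (Subgroup.eq_top_iff' _).mpr hk, MonoidHom.map_zpowers,
    monoidHomOfForallMemZpowers_apply_gen]

lemma _root_.Subgroup.closure_range_eq_iSup_zpowers {ι : Type*} (f : ι → H) :
    Subgroup.closure (Set.range f) = ⨆ i, Subgroup.zpowers (f i) := by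
  simp_rw [← Set.iUnion_singleton_eq_range, Subgroup.closure_iUnion, Subgroup.zpowers_eq_closure]

end Generators

theorem phi_surjective_general {V : Type u} (Γ : SimpleGraph V) (hsil : ¬ HasSIL Γ)
    (G : V → Type uG) [∀ v, Group (G v)]
    (gen : ∀ v, G v) (hgen : ∀ v, Subgroup.zpowers (gen v) = ⊤)
    (πfam : TV Γ → MulAut (GraphProduct Γ G))
    (hπ : ∀ p : TV Γ, IsPartialConj Γ G gen (πfam p) p.1.1 p.1.2) :
    ∃ φ : TildeProduct Γ G →* MulAut (GraphProduct Γ G),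
      (∀ p : TV Γ,
        φ (of (tilde Γ) (fun q : TV Γ => G q.1.1) (v := p) (gen p.1.1)) = πfam p) ∧
      φ.range = Subgroup.closure (Set.range πfam) := by
  have hgen' v : ∀ x, x ∈ Subgroup.zpowers (gen v) := (Subgroup.eq_top_iff' _).mp (hgen v)
  have horder (p : TV Γ) : orderOf (πfam p) ∣ orderOf (gen p.1.1) :=
    IsPartialConjBy.orderOf_dvd (hπ p) (TV.fst_notMem_snd Γ p)
  let f (p : TV Γ) : G p.1.1 →* MulAut (GraphProduct Γ G) :=
    monoidHomOfForallMemZpowers (hgen' p.1.1) (horder p)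
  have hf_range p : (f p).range = Subgroup.zpowers (πfam p) :=
    range_monoidHomOfForallMemZpowers _ _
  have hf_comm {p q : TV Γ} (hpq : (tilde Γ).Adj p q) (g : G p.1.1) (k : G q.1.1) :
      Commute (f p g) (f q k) := by
    have hg : f p g ∈ Subgroup.zpowers (πfam p) := hf_range p ▸ ⟨g, rfl⟩
    have hk : f q k ∈ Subgroup.zpowers (πfam q) := hf_range q ▸ ⟨k, rfl⟩
    obtain ⟨m, hm⟩ := Subgroup.mem_zpowers_iff.mp hg
    obtain ⟨n, hn⟩ := Subgroup.mem_zpowers_iff.mp hk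
    rw [← hm, ← hn]
    exact (IsPartialConj.commute_of_adj hsil hπ hpq).zpow_zpow m n
  refine ⟨GraphProduct.lift f hf_comm, fun p => ?_, ?_⟩
  · rw [GraphProduct.lift_of]
    exact monoidHomOfForallMemZpowers_apply_gen _ _
  · rw [GraphProduct.range_lift, Subgroup.closure_range_eq_iSup_zpowers]
    exact iSup_congr hf_range

/-- If `Γ` has no SIL, the assignment `p_{v,C} ↦ π_{v,C}` extends to a
surjective group homomorphism `φ : G_{Γ̃} → Aut^pc(G_Γ)`. -/
theorem phi_surjective {V : Type u} [Finite V] (Γ : SimpleGraph V) (hsil : ¬ HasSIL Γ)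
    (G : V → Type uG) [∀ v, Group (G v)] [∀ v, Nontrivial (G v)]
    (gen : ∀ v, G v) (hgen : ∀ v, Subgroup.zpowers (gen v) = ⊤)
    (πfam : TV Γ → MulAut (GraphProduct Γ G))
    (hπ : ∀ p : TV Γ, IsPartialConj Γ G gen (πfam p) p.1.1 p.1.2) :
    ∃ φ : TildeProduct Γ G →* MulAut (GraphProduct Γ G),
      (∀ p : TV Γ,
        φ (of (tilde Γ) (fun q : TV Γ => G q.1.1) (v := p) (gen p.1.1)) = πfam p) ∧
      φ.range = Subgroup.closure (Set.range πfam) :=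
  phi_surjective_general Γ hsil G gen hgen πfam hπ

end ArXiv
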